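/- arXiv:2409.18392 — 3 statements merged into one kernel-verified Lean document; each statement's English description precedes it below -/
import Mathlib

section
/- Let f : ℝ^m → ℝ be convex and differentiable, and let F = {x ∈ ℝ^m : eᵀx = N, ℓ ≤ x ≤ u} be nonempty. Let x ∈ F, and choose j ∈ argmin{∇f(x)_i : x_i < u_i} and k ∈ argmax{∇f(x)_i : x_i > ℓ_i}. If ∇f(x)_j ≥ ∇f(x)_k, then x is a global minimizer of f over F. -/
open Set

/-- Optimality condition underlying the vertex exchange method: if `f` is convex and
differentiable (on an open set containing `F`), `x ∈ F`,
`j ∈ argmin{∇f(x)_i : x_i < u_i}`, `k ∈ argmax{∇f(x)_i : x_i > ℓ_i}`, and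
`∇f(x)_j ≥ ∇f(x)_k`, then `x` is a global minimizer of `f` over
`F = {x : eᵀx = N, ℓ ≤ x ≤ u}`. -/
theorem vertex_exchange_optimality (m : ℕ) (N : ℝ) (l u : Fin m → ℝ)
    (hl : 0 ≤ l) (hlu : l ≤ u)
    (F : Set (Fin m → ℝ))
    (hF : F = {y : Fin m → ℝ | (∑ i, y i) = N ∧ l ≤ y ∧ y ≤ u})
    (hFne : F.Nonempty)
    (U : Set (Fin m → ℝ)) (hU : IsOpen U) (hFU : F ⊆ U)
    (f : (Fin m → ℝ) → ℝ) (hconv : ConvexOn ℝ U f)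
    (hdiff : ∀ y ∈ U, DifferentiableAt ℝ f y)
    (x : Fin m → ℝ) (hx : x ∈ F)
    (g : Fin m → ℝ) (hg : ∀ i, g i = fderiv ℝ f x (Pi.single i 1))
    (j k : Fin m)
    (hj : x j < u j) (hjmin : ∀ i, x i < u i → g j ≤ g i)
    (hk : l k < x k) (hkmax : ∀ i, l i < x i → g i ≤ g k)
    (hopt : g k ≤ g j) :
    ∀ y ∈ F, f x ≤ f y := by
  intro y hy
  set v : Fin m → ℝ := y - x with hvdef
  have hxF := hx
  rw [hF] at hxF hy
  obtain ⟨hxN, hxl, hxu⟩ := hxF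
  obtain ⟨hyN, hyl, hyu⟩ := hy
  have hsumv : ∑ i, v i = 0 := by
    simp only [hvdef, Pi.sub_apply, Finset.sum_sub_distrib, hxN, hyN, sub_self]
  have hterm : ∀ i, g j * v i ≤ g i * v i := by
    intro i
    have hvi : v i = y i - x i := rfl
    rcases lt_trichotomy (v i) 0 with h | h | h
    · have hxi : l i < x i := lt_of_le_of_lt (hyl i) (by nlinarith [hvi ▸ h])
      have := (hkmax i hxi).trans hopt
      nlinarith
    · simp [h]
    · have hxi : x i < u i := lt_of_lt_of_le (by nlinarith [hvi ▸ h]) (hyu i)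
      nlinarith [hjmin i hxi]
  have hdir : 0 ≤ ∑ i, g i * v i := by
    have h1 : ∑ i, g j * v i ≤ ∑ i, g i * v i := Finset.sum_le_sum fun i _ => hterm i
    have h2 : ∑ i, g j * v i = 0 := by rw [← Finset.mul_sum, hsumv, mul_zero]
    linarith
  have hxU : x ∈ U := hFU hx
  have hvsum : v = ∑ i, v i • (Pi.single i 1 : Fin m → ℝ) := by
    ext t
    simp [Pi.single_apply, Finset.sum_apply]
  have hfd : fderiv ℝ f x v = ∑ i, g i * v i := by
    conv_lhs => rw [hvsum]
    rw [map_sum]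
    refine Finset.sum_congr rfl fun i _ => ?_
    rw [map_smul, hg i, smul_eq_mul, mul_comm]
  by_cases hxy : y = x
  · simp [hxy]
  -- F is convex
  have hFconv : Convex ℝ F := by
    rw [hF]
    intro a ha b hb s t hs ht hst
    refine ⟨?_, fun i => ?_, fun i => ?_⟩
    · simp only [Pi.add_apply, Pi.smul_apply, smul_eq_mul, Finset.sum_add_distrib,
        ← Finset.mul_sum, ha.1, hb.1]
      rw [← add_mul, hst, one_mul]
    · have h1 : s * l i ≤ s * a i := mul_le_mul_of_nonneg_left (ha.2.1 i) hs
      have h2 : t * l i ≤ t * b i := mul_le_mul_of_nonneg_left (hb.2.1 i) ht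
      have h3 : s * l i + t * l i = l i := by rw [← add_mul, hst, one_mul]
      simp only [Pi.add_apply, Pi.smul_apply, smul_eq_mul]
      linarith
    · have h1 : s * a i ≤ s * u i := mul_le_mul_of_nonneg_left (ha.2.2 i) hs
      have h2 : t * b i ≤ t * u i := mul_le_mul_of_nonneg_left (hb.2.2 i) ht
      have h3 : s * u i + t * u i = u i := by rw [← add_mul, hst, one_mul]
      simp only [Pi.add_apply, Pi.smul_apply, smul_eq_mul]
      linarith
  -- the 1D function
  set c : ℝ → (Fin m → ℝ) := fun t => x + t • v with hcdef
  have hcmem : ∀ t ∈ Icc (0:ℝ) 1, c t ∈ F := by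
    intro t ht
    have : c t = (1 - t) • x + t • y := by
      ext i
      simp only [hcdef, hvdef, Pi.add_apply, Pi.smul_apply, Pi.sub_apply, smul_eq_mul]
      ring
    rw [this]
    exact hFconv hx (hF ▸ ⟨hyN, hyl, hyu⟩) (by linarith [ht.2]) ht.1 (by ring)
  have hconv1 : ConvexOn ℝ (Icc (0:ℝ) 1) (f ∘ c) := by
    have hcaff : ∀ t, c t = AffineMap.lineMap x y t := by
      intro t
      ext i
      simp only [hcdef, hvdef, AffineMap.lineMap_apply, vsub_eq_sub, vadd_eq_add,
        Pi.add_apply, Pi.smul_apply, Pi.sub_apply, smul_eq_mul]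
      ring
    have h := (hconv.comp_affineMap (AffineMap.lineMap x y)).subset
      (fun t ht => by
        rw [Set.mem_preimage, ← hcaff]
        exact hFU (hcmem t ht)) (convex_Icc 0 1)
    have hfun : f ∘ c = f ∘ (AffineMap.lineMap x y) :=
      funext fun t => by rw [Function.comp_apply, Function.comp_apply, hcaff]
    rw [hfun]
    exact h
  have hderiv : HasDerivAt (f ∘ c) (fderiv ℝ f x v) 0 := by
    have hc0 : c 0 = x := by simp [hcdef]
    have hcd : HasDerivAt c v 0 := by
      have : HasDerivAt (fun t : ℝ => t • v) ((1:ℝ) • v) 0 :=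
        (hasDerivAt_id 0).smul_const v
      rw [one_smul] at this
      exact this.const_add x
    have hf' : HasFDerivAt f (fderiv ℝ f x) (c 0) := hc0 ▸ (hdiff x hxU).hasFDerivAt
    exact hf'.comp_hasDerivAt 0 hcd
  have hslope := hconv1.le_slope_of_hasDerivAt (left_mem_Icc.2 zero_le_one)
    (right_mem_Icc.2 zero_le_one) zero_lt_one hderiv
  rw [slope_def_field] at hslope
  have hc1 : c 1 = y := by simp [hcdef, hvdef]
  have hc0 : c 0 = x := by simp [hcdef]
  simp only [Function.comp_apply, hc1, hc0, div_one, sub_zero] at hslope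
  rw [hfd] at hslope
  linarith
end

section
/- Let q(z;x) be a strongly convex quadratic with positive definite Hessian H = ∇²f(x), and F = {z : eᵀz = N, ℓ ≤ z ≤ u}. For z ∈ F, choose j ∈ argmin{∇q(z;x)_i : z_i < u_i} and k ∈ argmax{∇q(z;x)_i : z_i > ℓ_i}. Then z is the optimal solution of min_{F} q(·;x) if and only if ∇q(z;x)_k ≤ ∇q(z;x)_j. -/
open Matrix Set

/-- Lemma 3 of the vertex exchange method for the QP subproblem: for the strongly convex
quadratic `q(z;x) = f(x) + ∇f(x)ᵀ(z−x) + ½(z−x)ᵀH(z−x)` with `H ≻ 0` and gradient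
`∇q(z;x) = ∇f(x) + H(z−x)`, a feasible `z ∈ F` is optimal for `min_F q(·;x)` iff
`∇q(z;x)_k ≤ ∇q(z;x)_j`, where `j ∈ argmin{∇q(z;x)_i : z_i < u_i}` and
`k ∈ argmax{∇q(z;x)_i : z_i > ℓ_i}`. -/
theorem qp_vertex_exchange_optimality (m : ℕ) (fx : ℝ) (g x : Fin m → ℝ)
    (H : Matrix (Fin m) (Fin m) ℝ) (hH : H.PosDef)
    (N : ℝ) (l u : Fin m → ℝ) (hlu : ∀ i, l i < u i)
    (hlN : (∑ i, l i) < N) (hNu : N < ∑ i, u i)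
    (F : Set (Fin m → ℝ))
    (hF : F = {w : Fin m → ℝ | (∑ i, w i) = N ∧ l ≤ w ∧ w ≤ u})
    (q : (Fin m → ℝ) → ℝ)
    (hq : ∀ w, q w = fx + g ⬝ᵥ (w - x) + (1 / 2) * ((w - x) ⬝ᵥ (H *ᵥ (w - x))))
    (z : Fin m → ℝ) (hz : z ∈ F)
    (G : Fin m → ℝ) (hG : ∀ i, G i = g i + (H *ᵥ (z - x)) i)
    (j k : Fin m)
    (hj : z j < u j) (hjmin : ∀ i, z i < u i → G j ≤ G i)
    (hk : l k < z k) (hkmax : ∀ i, l i < z i → G i ≤ G k) :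
    (∀ w ∈ F, q z ≤ q w) ↔ G k ≤ G j := by
  subst hF
  obtain ⟨hzN, hzl, hzu⟩ := hz
  -- symmetry of H
  have hsym : ∀ v w : Fin m → ℝ, v ⬝ᵥ (H *ᵥ w) = w ⬝ᵥ (H *ᵥ v) := by
    intro v w
    simp only [dotProduct, mulVec, dotProduct, Finset.mul_sum]
    rw [Finset.sum_comm]
    refine Finset.sum_congr rfl fun i _ => Finset.sum_congr rfl fun p _ => ?_
    have hij : H i p = H p i := by
      have := congrFun (congrFun hH.1 p) i
      simpa [Matrix.conjTranspose_apply] using this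
    rw [hij]; ring
  -- key expansion
  have hkey : ∀ w : Fin m → ℝ,
      q w - q z = G ⬝ᵥ (w - z) + (1 / 2) * ((w - z) ⬝ᵥ (H *ᵥ (w - z))) := by
    intro w
    have hw : w - x = (w - z) + (z - x) := by abel
    have hG' : G = g + H *ᵥ (z - x) := funext fun i => by simp [hG i]
    rw [hq w, hq z, hw, hG']
    simp only [mulVec_add, dotProduct_add, add_dotProduct]
    rw [hsym (z - x) (w - z), dotProduct_comm (H *ᵥ (z - x)) (w - z),
      dotProduct_mulVec]
    ring_nf
  constructor
  · -- optimality → G k ≤ G j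
    intro hopt
    by_contra hlt
    push_neg at hlt
    have hjk : j ≠ k := by rintro rfl; exact lt_irrefl _ hlt
    set v : Fin m → ℝ := Pi.single j 1 - Pi.single k 1 with hv
    have hvj : v j = 1 := by simp [hv, Pi.single_apply, hjk]
    have hvk : v k = -1 := by simp [hv, Pi.single_apply, hjk.symm]
    have hvne : v ≠ 0 := fun h => by simp [h] at hvj
    have hc : 0 < v ⬝ᵥ (H *ᵥ v) := by
      have := hH.dotProduct_mulVec_pos hvne
      simpa using this
    set c : ℝ := v ⬝ᵥ (H *ᵥ v) with hcdef
    set ε : ℝ := min (min (u j - z j) (z k - l k)) ((G k - G j) / c) with hε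
    have hε1 : 0 < ε := by
      apply lt_min (lt_min (by linarith) (by linarith))
      exact div_pos (by linarith) hc
    have hεuj : ε ≤ u j - z j := le_trans (min_le_left _ _) (min_le_left _ _)
    have hεlk : ε ≤ z k - l k := le_trans (min_le_left _ _) (min_le_right _ _)
    have hεc : ε * c ≤ G k - G j := by
      have : ε ≤ (G k - G j) / c := min_le_right _ _
      calc ε * c ≤ ((G k - G j) / c) * c := by nlinarith
        _ = G k - G j := by field_simp
    set w : Fin m → ℝ := z + ε • v with hwdef
    have hwz : w - z = ε • v := by simp [hwdef]
    have hwmem : w ∈ {w : Fin m → ℝ | (∑ i, w i) = N ∧ l ≤ w ∧ w ≤ u} := by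
      refine ⟨?_, ?_, ?_⟩
      · have : ∑ i, w i = (∑ i, z i) + ε * ∑ i, v i := by
          simp [hwdef, Finset.sum_add_distrib, Finset.mul_sum]
        rw [this, hzN]
        have : ∑ i, v i = 0 := by
          simp [hv, Finset.sum_sub_distrib, Finset.sum_pi_single]
        rw [this]; ring
      · rw [Pi.le_def]
        intro i
        have hwi : w i = z i + ε * v i := by simp [hwdef]
        by_cases hik : i = k
        · rw [hik] at hwi ⊢
          rw [hvk] at hwi
          linarith
        · have hvi : 0 ≤ v i := by
            simp only [hv, Pi.sub_apply, Pi.single_apply]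
            rw [if_neg hik]
            split <;> norm_num
          have := hzl i
          nlinarith
      · rw [Pi.le_def]
        intro i
        have hwi : w i = z i + ε * v i := by simp [hwdef]
        by_cases hij : i = j
        · rw [hij] at hwi ⊢
          rw [hvj] at hwi
          linarith
        · have hvi : v i ≤ 0 := by
            simp only [hv, Pi.sub_apply, Pi.single_apply]
            rw [if_neg hij]
            split <;> norm_num
          have := hzu i
          nlinarith
    have hqw := hopt w hwmem
    have hq1 := hkey w
    rw [hwz] at hq1
    have hGv : G ⬝ᵥ v = G j - G k := by
      simp [hv, dotProduct_sub, dotProduct_single]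
    have hexp : q w - q z = ε * (G j - G k) + (1 / 2) * (ε * ε * c) := by
      rw [hq1, smul_dotProduct, mulVec_smul, dotProduct_smul, hGv]
      simp [hcdef]; ring
    nlinarith
  · -- G k ≤ G j → optimality
    intro hGkj w hw
    obtain ⟨hwN, hwl, hwu⟩ := hw
    have hpos : 0 ≤ (w - z) ⬝ᵥ (H *ᵥ (w - z)) := by
      rcases eq_or_ne (w - z) 0 with h | h
      · simp [h]
      · have := hH.dotProduct_mulVec_pos h
        simpa using this.le
    have hlin : 0 ≤ G ⬝ᵥ (w - z) := by
      have h1 : ∀ i, G j * (w i - z i) ≤ G i * (w i - z i) := by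
        intro i
        rcases lt_trichotomy (w i) (z i) with h | h | h
        · have hzi : l i < z i := lt_of_le_of_lt (hwl i) h
          have : G i ≤ G j := le_trans (hkmax i hzi) hGkj
          nlinarith
        · rw [h]; ring_nf; rfl
        · have hzi : z i < u i := lt_of_lt_of_le h (hwu i)
          have : G j ≤ G i := hjmin i hzi
          nlinarith
      have h2 : ∑ i, G j * (w i - z i) ≤ ∑ i, G i * (w i - z i) :=
        Finset.sum_le_sum fun i _ => h1 i
      have h3 : ∑ i, G j * (w i - z i) = 0 := by
        rw [← Finset.mul_sum, Finset.sum_sub_distrib, hwN, hzN]; ring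
      calc (0:ℝ) = ∑ i, G j * (w i - z i) := h3.symm
        _ ≤ ∑ i, G i * (w i - z i) := h2
        _ = G ⬝ᵥ (w - z) := by simp [dotProduct]
    have := hkey w
    linarith
end

section
/- Let q(z) = gᵀz + ½ zᵀHz with H symmetric positive definite, z ∈ ℝ^m, indices j ≠ k, and ∇q(z)_k > ∇q(z)_j. Let T = min{u_j − z_j, z_k − ℓ_k} > 0. Then the minimizer of η ↦ q(z + η(e_j − e_k)) over [0, T] is η* = min{T, (∇q(z)_k − ∇q(z)_j)/(H_{jj} + H_{kk} − H_{jk} − H_{kj})}, and the denominator H_{jj} + H_{kk} − H_{jk} − H_{kj} is strictly positive. -/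
open Matrix Set

/-- Analytic line-search step of the vertex exchange method for QP: for
`q(z) = gᵀz + ½ zᵀHz` with `H` symmetric positive definite, gradient `∇q(z) = g + Hz`,
indices `j ≠ k` with `∇q(z)_k > ∇q(z)_j`, and `T = min{u_j − z_j, z_k − ℓ_k} > 0`, the
denominator `H_jj + H_kk − H_jk − H_kj` is positive and
`η* = min{T, (∇q(z)_k − ∇q(z)_j)/(H_jj + H_kk − H_jk − H_kj)}` minimizes
`η ↦ q(z + η(e_j − e_k))` over `[0, T]`. -/
theorem qp_line_search (m : ℕ) (g : Fin m → ℝ)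
    (H : Matrix (Fin m) (Fin m) ℝ) (hH : H.PosDef)
    (l u z : Fin m → ℝ)
    (q : (Fin m → ℝ) → ℝ)
    (hq : ∀ w, q w = g ⬝ᵥ w + (1 / 2) * (w ⬝ᵥ (H *ᵥ w)))
    (G : Fin m → ℝ) (hG : ∀ i, G i = g i + (H *ᵥ z) i)
    (j k : Fin m) (hjk : j ≠ k)
    (hdesc : G j < G k)
    (T : ℝ) (hT : T = min (u j - z j) (z k - l k)) (hTpos : 0 < T) :
    0 < H j j + H k k - H j k - H k j ∧
      (min T ((G k - G j) / (H j j + H k k - H j k - H k j)) ∈ Icc (0 : ℝ) T ∧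
        ∀ η ∈ Icc (0 : ℝ) T,
          q (z + (min T ((G k - G j) / (H j j + H k k - H j k - H k j))) •
              ((Pi.single j 1 : Fin m → ℝ) - Pi.single k 1))
            ≤ q (z + η • ((Pi.single j 1 : Fin m → ℝ) - Pi.single k 1))) := by
  classical
  have hHsymm : Hᵀ = H := hH.1
  set d : Fin m → ℝ := (Pi.single j 1 : Fin m → ℝ) - Pi.single k 1 with hd
  have hdne : d ≠ 0 := by
    intro h
    have := congrFun h j
    simp [hd, Pi.single_apply, hjk] at this
  set B : ℝ := H j j + H k k - H j k - H k j with hB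
  have hHd : ∀ i, (H *ᵥ d) i = H i j - H i k := by
    intro i
    simp [hd, mulVec_sub, Matrix.mulVec_single]
  have hBval : d ⬝ᵥ (H *ᵥ d) = B := by
    simp only [hd, sub_dotProduct, single_dotProduct, one_mul]
    rw [hHd j, hHd k]; ring
  have hBpos : 0 < B := by
    have h2 := hH.dotProduct_mulVec_pos hdne
    rw [show (star d) = d from rfl] at h2
    simpa [hBval] using h2
  have hdv : ∀ v : Fin m → ℝ, d ⬝ᵥ v = v j - v k := by
    intro v
    simp [hd, sub_dotProduct, single_dotProduct]
  have hswap : z ⬝ᵥ (H *ᵥ d) = d ⬝ᵥ (H *ᵥ z) := by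
    conv_lhs => rw [← hHsymm]
    rw [Matrix.mulVec_transpose, dotProduct_comm, dotProduct_mulVec]
  have hq' : ∀ η : ℝ, q (z + η • d) =
      q z + η * (G j - G k) + η ^ 2 / 2 * B := by
    intro η
    rw [hq, hq]
    simp only [dotProduct_add, add_dotProduct, mulVec_add, mulVec_smul,
      dotProduct_smul, smul_dotProduct, smul_eq_mul]
    rw [hswap, hBval, hdv (H *ᵥ z), dotProduct_comm g d, hdv g]
    have h1 : G j = g j + (H *ᵥ z) j := hG j
    have h2 : G k = g k + (H *ᵥ z) k := hG k
    rw [h1, h2]; ring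
  refine ⟨hBpos, ⟨le_min hTpos.le ?_, min_le_left _ _⟩, ?_⟩
  · exact (div_pos (by linarith) hBpos).le
  · intro η hη
    obtain ⟨hη0, hηT⟩ := hη
    rw [hq' _, hq' _]
    rcases le_total ((G k - G j) / B) T with hc | hc
    · rw [min_eq_right hc]
      have hkey : B * ((G k - G j) / B) = G k - G j := by
        field_simp
      nlinarith [sq_nonneg (η - (G k - G j) / B), hBpos]
    · rw [min_eq_left hc]
      have hkey : T * B ≤ G k - G j := (le_div_iff₀ hBpos).mp hc
      nlinarith [mul_nonneg (sub_nonneg.2 hηT) (sub_nonneg.2 hηT), hBpos]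
end
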